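/- Let Q, V, Q̊, V̊ be 2×2 matrices of Laurent polynomials over ℂ such that V(z)Q(z) = diag(1, d(z)) = V̊(z)Q̊(z) for all z ∈ ℂ∖{0}, and det(V̊(z)) = λ z^k det(V(z)) for some λ ∈ ℂ∖{0} and k ∈ ℤ. Then there exists a 2×2 matrix U of Laurent polynomials with det(U(z)) = λ z^k and V̊(z) = V(z)U(z). -/

import Mathlib

noncomputable section
open LaurentPolynomial Matrix

/-- The adjoint (star) of a Laurent polynomial: (Σ u(k)zᵏ)⋆ = Σ conj(u(k)) z⁻ᵏ. -/
def lstar (p : LaurentPolynomial ℂ) : LaurentPolynomial ℂ :=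
  p.coeff.sum fun k c => LaurentPolynomial.C (starRingEnd ℂ c) * LaurentPolynomial.T (-k)

/-- Evaluation of a Laurent polynomial at a nonzero complex number. -/
def leval (z : ℂ) (p : LaurentPolynomial ℂ) : ℂ :=
  p.coeff.sum fun k c => c * z ^ k

/-- Substitution z ↦ -z in a Laurent polynomial. -/
def nsub (p : LaurentPolynomial ℂ) : LaurentPolynomial ℂ :=
  p.coeff.sum fun k c => LaurentPolynomial.C (c * (-1 : ℂ) ^ k) * LaurentPolynomial.T k

/-- Substitution z ↦ z² in a Laurent polynomial. -/
def ssub (p : LaurentPolynomial ℂ) : LaurentPolynomial ℂ :=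
  p.coeff.sum fun k c => LaurentPolynomial.C c * LaurentPolynomial.T (2 * k)

/-- Entrywise evaluation of a matrix of Laurent polynomials. -/
def meval {m n : ℕ} (z : ℂ) (M : Matrix (Fin m) (Fin n) (LaurentPolynomial ℂ)) :
    Matrix (Fin m) (Fin n) ℂ :=
  M.map (leval z)

/-- Star-adjoint transpose of a matrix of Laurent polynomials. -/
def mstar {m n : ℕ} (M : Matrix (Fin m) (Fin n) (LaurentPolynomial ℂ)) :
    Matrix (Fin n) (Fin m) (LaurentPolynomial ℂ) :=
  (M.map lstar)ᵀ

/-- The γ-coset of a Laurent polynomial: coefficient of zᵏ is the coefficient of z^{γ+2k}. -/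
def coset (γ : ℤ) (p : LaurentPolynomial ℂ) : LaurentPolynomial ℂ :=
  p.coeff.sum fun k c => if (k - γ) % 2 = 0 then LaurentPolynomial.C c * LaurentPolynomial.T ((k - γ) / 2) else 0


/-!
Evaluation at the points of `ℂ ∖ {0}` is injective on Laurent polynomials, so the hypotheses
are identities `V * Q = diag(1, d) = V' * Q'` over `ℂ[T;T⁻¹]`, and only their first columns
matter: `V q = e₀` for the first column `q` of `Q`. Completing `q` by `(-V₀₁, V₀₀)` to a matrix
`P` gives `V * P = diag(1, det V)` and `det P = 1`; likewise `V' * P' = diag(1, det V')`. Hence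
`V' = diag(1, det V') * adj P' = V * P * diag(1, λ Tᵏ) * adj P'`, and
`U = P * diag(1, λ Tᵏ) * adj P'` has determinant `λ Tᵏ`.
-/

namespace Matrix

variable {R : Type*} [CommRing R]

def firstColumnCompletion (V : Matrix (Fin 2) (Fin 2) R) (v : Fin 2 → R) :
    Matrix (Fin 2) (Fin 2) R :=
  !![v 0, -V 0 1; v 1, V 0 0]

variable {V : Matrix (Fin 2) (Fin 2) R} {v : Fin 2 → R}

theorem mulVec_eq_single_zero_one_iff :
    V *ᵥ v = Pi.single 0 1 ↔ V 0 0 * v 0 + V 0 1 * v 1 = 1 ∧ V 1 0 * v 0 + V 1 1 * v 1 = 0 := by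
  simp [funext_iff, Fin.forall_fin_two]

theorem det_firstColumnCompletion (hv : V *ᵥ v = Pi.single 0 1) :
    (firstColumnCompletion V v).det = 1 := by
  rw [firstColumnCompletion, det_fin_two_of]
  linear_combination (mulVec_eq_single_zero_one_iff.1 hv).1

theorem mul_firstColumnCompletion (hv : V *ᵥ v = Pi.single 0 1) :
    V * firstColumnCompletion V v = diagonal ![1, V.det] := by
  obtain ⟨h0, h1⟩ := mulVec_eq_single_zero_one_iff.1 hv
  ext i j
  fin_cases i <;> fin_cases j <;> simp [firstColumnCompletion, mul_apply, det_fin_two]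
  · linear_combination h0
  · ring
  · linear_combination h1
  · ring

theorem exists_det_eq_and_eq_mul_of_mulVec_eq_single {V' : Matrix (Fin 2) (Fin 2) R}
    {v' : Fin 2 → R} {t : R} (hv : V *ᵥ v = Pi.single 0 1) (hv' : V' *ᵥ v' = Pi.single 0 1)
    (hdet : V'.det = t * V.det) : ∃ U : Matrix (Fin 2) (Fin 2) R, U.det = t ∧ V' = V * U := by
  set P' := firstColumnCompletion V' v'
  refine ⟨firstColumnCompletion V v * diagonal ![1, t] * adjugate P', ?_, ?_⟩
  · simp [P', det_adjugate, det_firstColumnCompletion hv, det_firstColumnCompletion hv']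
  · calc V' = V' * P' * adjugate P' := by
          rw [mul_assoc, mul_adjugate, det_firstColumnCompletion hv', one_smul, mul_one]
      _ = diagonal ![1, V.det] * diagonal ![1, t] * adjugate P' := by
          rw [mul_firstColumnCompletion hv', hdet, diagonal_mul_diagonal]
          congr 2; ext i; fin_cases i <;> simp [mul_comm]
      _ = V * (firstColumnCompletion V v * diagonal ![1, t] * adjugate P') := by
          rw [← mul_firstColumnCompletion hv]; simp only [mul_assoc]

end Matrix

namespace LaurentPolynomial

theorem eq_zero_of_forall_eval₂_eq_zero {K : Type*} [Field K] [Infinite K] {p : K[T;T⁻¹]}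
    (h : ∀ x : Kˣ, eval₂ (RingHom.id K) x p = 0) : p = 0 := by
  obtain ⟨n, f, hf⟩ := p.exists_T_pow
  have hroots : {x : K | x ≠ 0} ⊆ {x | f.IsRoot x} := fun x hx => by
    have := congrArg (eval₂ (RingHom.id K) (Units.mk0 x hx)) hf
    rwa [eval₂_toLaurent, map_mul, h, zero_mul, Polynomial.eval₂_id] at this
  have hf0 : f = 0 :=
    Polynomial.eq_zero_of_infinite_isRoot f ((Set.finite_singleton 0).infinite_compl.mono hroots)
  rwa [hf0, map_zero, eq_comm, (isUnit_T _).mul_left_eq_zero] at hf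

end LaurentPolynomial

theorem leval_eq_eval₂ {z : ℂ} (hz : z ≠ 0) (p : ℂ[T;T⁻¹]) :
    leval z p = eval₂ (RingHom.id ℂ) (Units.mk0 z hz) p := by
  induction p using LaurentPolynomial.induction_on' with
  | add p q hp hq =>
    rw [map_add, ← hp, ← hq, _root_.leval, _root_.leval, _root_.leval, AddMonoidAlgebra.coeff_add]
    exact Finsupp.sum_add_index' (fun _ => zero_mul _) (fun _ _ _ => add_mul _ _ _)
  | C_mul_T n c =>
    rw [eval₂_C_mul_T, ← single_eq_C_mul_T, _root_.leval]
    simp [Units.val_zpow_eq_zpow_val, -single_eq_C_mul_T]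

theorem meval_mul {n : ℕ} {z : ℂ} (hz : z ≠ 0) (M N : Matrix (Fin n) (Fin n) ℂ[T;T⁻¹]) :
    meval z (M * N) = meval z M * meval z N := by
  simp only [meval, funext (leval_eq_eval₂ hz)]
  exact Matrix.map_mul

theorem eq_of_forall_meval_eq {m n : ℕ} {M N : Matrix (Fin m) (Fin n) ℂ[T;T⁻¹]}
    (h : ∀ z : ℂ, z ≠ 0 → meval z M = meval z N) : M = N := by
  refine Matrix.ext fun i j => ?_
  rw [← sub_eq_zero]
  refine eq_zero_of_forall_eval₂_eq_zero (K := ℂ) fun x => ?_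
  have := congr_fun₂ (h x x.ne_zero) i j
  simp only [meval, Matrix.map_apply, leval_eq_eval₂ x.ne_zero, Units.mk0_val] at this
  rw [map_sub, this, sub_self]

theorem stmt14_general (V Q V' Q' : Matrix (Fin 2) (Fin 2) (LaurentPolynomial ℂ))
    (d : LaurentPolynomial ℂ) (l : ℂ) (k : ℤ)
    (h1 : ∀ z : ℂ, z ≠ 0 → meval z V * meval z Q = meval z (Matrix.diagonal ![1, d]))
    (h2 : ∀ z : ℂ, z ≠ 0 → meval z V' * meval z Q' = meval z (Matrix.diagonal ![1, d]))
    (hdet : V'.det = LaurentPolynomial.C l * LaurentPolynomial.T k * V.det) :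
    ∃ U : Matrix (Fin 2) (Fin 2) (LaurentPolynomial ℂ),
      U.det = LaurentPolynomial.C l * LaurentPolynomial.T k ∧ V' = V * U := by
  have first_column {W P : Matrix (Fin 2) (Fin 2) ℂ[T;T⁻¹]}
      (hWP : ∀ z : ℂ, z ≠ 0 → meval z W * meval z P = meval z (diagonal ![1, d])) :
      W *ᵥ P.col 0 = Pi.single 0 1 := by
    have hWP' : W * P = diagonal ![1, d] :=
      eq_of_forall_meval_eq fun z hz => by rw [meval_mul hz, hWP z hz]
    rw [← mulVec_single_one, mulVec_mulVec, hWP', diagonal_mulVec_single]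
    simp
  exact exists_det_eq_and_eq_mul_of_mulVec_eq_single (first_column h1) (first_column h2) hdet

theorem stmt14 (V Q V' Q' : Matrix (Fin 2) (Fin 2) (LaurentPolynomial ℂ))
    (d : LaurentPolynomial ℂ) (l : ℂ) (k : ℤ) (hl : l ≠ 0)
    (h1 : ∀ z : ℂ, z ≠ 0 → meval z V * meval z Q = meval z (Matrix.diagonal ![1, d]))
    (h2 : ∀ z : ℂ, z ≠ 0 → meval z V' * meval z Q' = meval z (Matrix.diagonal ![1, d]))
    (hdet : V'.det = LaurentPolynomial.C l * LaurentPolynomial.T k * V.det) :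
    ∃ U : Matrix (Fin 2) (Fin 2) (LaurentPolynomial ℂ),
      U.det = LaurentPolynomial.C l * LaurentPolynomial.T k ∧ V' = V * U :=
  stmt14_general V Q V' Q' d l k h1 h2 hdet
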